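/- arXiv:2404.18444 — 2 statements merged into one kernel-verified Lean document; each statement's English description precedes it below -/
import Mathlib

section
/- For any δ > 0, setting M = ⌈1/δ⌉ + 1, there exist coefficients {(a_j, w_j, b_j)}_{j∈[M]} with |a_j| ≤ 2, |w_j| ≤ 1, |b_j| ≤ log M, such that the function exp_δ(x) = Σ_{j=1}^M a_j · ReLU(w_j x + b_j) satisfies: exp_δ is non-decreasing on (-∞, 0], sup_{x ≤ 0} |exp(x) - exp_δ(x)| ≤ δ, and exp_δ(0) = 1. -/
/-!
The network is the piecewise-linear interpolant of `exp` at the knots `t k = log (k / (n + 1))`,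
`k = 1, …, n + 1`, where `n = ⌈1 / δ⌉`, continued by the constant `1 / (n + 1)` to the left
of `t 1`: a constant neuron plus a ReLU at each knot `t 1, …, t n`, whose outer weight is the jump
of the chord slope there. Chord slopes of a convex function increase, so the network is monotone.
Summation by parts turns it into `1 / (n + 1)` plus one chord piece per interval
`[t k, t (k + 1)]`. By convexity each piece dominates the increment of `min (exp x) (exp t)` over
its interval, and these telescope to at least `exp x - 1 / (n + 1)`; moreover each piece vanishes
left of its interval and never exceeds the increment `1 / (n + 1)` of `exp` over it. Hence
`exp x ≤ net x ≤ 1 / (n + 1) + min (exp x) (n / (n + 1))` for `x ≤ 0`, which gives the error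
bound `1 / (n + 1) ≤ δ` and `net 0 = 1`.
-/

open Real Finset

theorem slope_mul_sub (f : ℝ → ℝ) (a b : ℝ) : slope f a b * (b - a) = f b - f a := by
  rw [mul_comm]; exact sub_smul_slope f a b

section ChordPiece

variable {f : ℝ → ℝ} {a b : ℝ}

theorem min_sub_min_le_slope_mul_max_sub_max (hf : Monotone f) (hconv : ConvexOn ℝ Set.univ f)
    (hab : a < b) (x : ℝ) :
    min (f x) (f b) - min (f x) (f a) ≤ slope f a b * (max (x - a) 0 - max (x - b) 0) := by
  rcases le_total x a with hxa | hax
  · rw [min_eq_left (hf (hxa.trans hab.le)), min_eq_left (hf hxa),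
      max_eq_right (by linarith), max_eq_right (by linarith)]
    simp
  rcases le_total x b with hxb | hbx
  · rw [min_eq_left (hf hxb), min_eq_right (hf hax), max_eq_left (by linarith),
      max_eq_right (by linarith), sub_zero]
    rcases hax.eq_or_lt with rfl | hax
    · simp
    have hsec := hconv.secant_mono (Set.mem_univ a) (Set.mem_univ x) (Set.mem_univ b)
      hax.ne' hab.ne' hxb
    rw [slope_def_field]
    rwa [div_le_iff₀ (sub_pos.2 hax)] at hsec
  · rw [min_eq_right (hf hbx), min_eq_right (hf (hab.le.trans hbx)), max_eq_left (by linarith),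
      max_eq_left (by linarith), sub_sub_sub_cancel_left, slope_mul_sub]

theorem slope_mul_max_sub_max_le (hf : Monotone f) (hab : a < b) (x : ℝ) :
    slope f a b * (max (x - a) 0 - max (x - b) 0) ≤ f b - f a := by
  have hclamp : max (x - a) 0 - max (x - b) 0 ≤ b - a :=
    (le_abs_self _).trans <| (abs_max_sub_max_le_abs _ _ _).trans <| by
      rw [sub_sub_sub_cancel_left, abs_of_pos (sub_pos.2 hab)]
  have hslope : 0 ≤ slope f a b := by
    rw [slope_def_field]; exact div_nonneg (sub_nonneg.2 (hf hab.le)) (sub_pos.2 hab).le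
  calc slope f a b * (max (x - a) 0 - max (x - b) 0) ≤ slope f a b * (b - a) :=
        mul_le_mul_of_nonneg_left hclamp hslope
    _ = f b - f a := slope_mul_sub f a b

end ChordPiece

theorem sum_range_sub_mul_eq_sum_mul_sub (σ r : ℕ → ℝ) (n : ℕ) (hσ : σ 0 = 0)
    (hr : r n = 0) :
    ∑ i ∈ range n, (σ (i + 1) - σ i) * r i =
      ∑ i ∈ range n, σ (i + 1) * (r i - r (i + 1)) := by
  have htel : ∑ i ∈ range n, (σ (i + 1) * r (i + 1) - σ i * r i) = 0 := by
    rw [sum_range_sub (fun i => σ i * r i)]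
    simp [hσ, hr]
  rw [← sub_eq_zero, ← sum_sub_distrib, ← htel]
  exact sum_congr rfl fun i _ => by ring

theorem exp_le_slope_exp {a b : ℝ} (hab : a < b) : exp a ≤ slope exp a b :=
  convexOn_exp.le_slope_of_hasDerivAt (Set.mem_univ a) (Set.mem_univ b) hab (hasDerivAt_exp a)

theorem slope_exp_le_exp {a b : ℝ} (hab : a < b) : slope exp a b ≤ exp b :=
  convexOn_exp.slope_le_of_hasDerivAt (Set.mem_univ a) (Set.mem_univ b) hab (hasDerivAt_exp b)

noncomputable def expKnot (n k : ℕ) : ℝ := log (k / (n + 1))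

noncomputable def expKnotSlope (n k : ℕ) : ℝ :=
  if k = 0 then 0 else slope exp (expKnot n k) (expKnot n (k + 1))

section ExpKnot

variable {n k : ℕ}

theorem exp_expKnot (hk : 0 < k) : exp (expKnot n k) = k / (n + 1) :=
  exp_log (by positivity)

theorem expKnot_lt_succ (hk : 0 < k) : expKnot n k < expKnot n (k + 1) := by
  unfold expKnot
  apply log_lt_log (by positivity)
  push_cast
  gcongr
  linarith

theorem expKnot_succ_self (n : ℕ) : expKnot n (n + 1) = 0 := by
  simp [expKnot]

theorem expKnot_nonpos (hk : k ≤ n + 1) : expKnot n k ≤ 0 :=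
  log_nonpos (by positivity) (div_le_one_of_le₀ (by exact_mod_cast hk) (by positivity))

theorem neg_log_le_expKnot (hk : 0 < k) : -log (n + 1) ≤ expKnot n k := by
  rw [expKnot, log_div (by positivity) (by positivity)]
  linarith [log_natCast_nonneg k]

theorem expKnotSlope_zero (n : ℕ) : expKnotSlope n 0 = 0 := if_pos rfl

theorem expKnotSlope_succ (n k : ℕ) :
    expKnotSlope n (k + 1) = slope exp (expKnot n (k + 1)) (expKnot n (k + 1 + 1)) :=
  if_neg k.succ_ne_zero

theorem expKnotSlope_mem (hk : 0 < k) :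
    k / (n + 1) ≤ expKnotSlope n k ∧ expKnotSlope n k ≤ (k + 1) / (n + 1) := by
  rw [expKnotSlope, if_neg hk.ne']
  have hlt := expKnot_lt_succ (n := n) hk
  constructor
  · simpa only [exp_expKnot hk] using exp_le_slope_exp hlt
  · simpa only [exp_expKnot k.succ_pos, Nat.cast_succ] using slope_exp_le_exp hlt

theorem expKnotSlope_nonneg (n k : ℕ) : 0 ≤ expKnotSlope n k := by
  rcases k.eq_zero_or_pos with rfl | hk
  · exact (expKnotSlope_zero n).ge
  · exact (by positivity : (0 : ℝ) ≤ k / (n + 1)).trans (expKnotSlope_mem hk).1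

theorem monotone_expKnotSlope (n : ℕ) : Monotone (expKnotSlope n) := by
  refine monotone_nat_of_le_succ fun k => ?_
  rcases k.eq_zero_or_pos with rfl | hk
  · exact (expKnotSlope_zero n).trans_le (expKnotSlope_nonneg n 1)
  · exact (expKnotSlope_mem hk).2.trans (by exact_mod_cast (expKnotSlope_mem k.succ_pos).1)

theorem expKnotSlope_le_one (hk : k ≤ n) : expKnotSlope n k ≤ 1 := by
  rcases k.eq_zero_or_pos with rfl | hk0
  · exact (expKnotSlope_zero n).trans_le zero_le_one
  · exact (expKnotSlope_mem hk0).2.trans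
      (div_le_one_of_le₀ (by exact_mod_cast Nat.succ_le_succ hk) (by positivity))

end ExpKnot

def reluNet {M : ℕ} (a w b : Fin M → ℝ) (x : ℝ) : ℝ :=
  ∑ j, a j * max (w j * x + b j) 0

theorem monotone_reluNet {M : ℕ} {a w b : Fin M → ℝ} (ha : ∀ j, 0 ≤ a j)
    (hw : ∀ j, 0 ≤ w j) :
    Monotone (reluNet a w b) := fun _ _ hxy =>
  sum_le_sum fun j _ => mul_le_mul_of_nonneg_left
    (max_le_max (add_le_add_left (mul_le_mul_of_nonneg_left hxy (hw j)) _) le_rfl) (ha j)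

noncomputable def expNetA (n : ℕ) : Fin (n + 1) → ℝ :=
  Fin.cons 1 fun i => expKnotSlope n ((i : ℕ) + 1) - expKnotSlope n i

def expNetW (n : ℕ) : Fin (n + 1) → ℝ :=
  Fin.cons 0 fun _ => 1

noncomputable def expNetB (n : ℕ) : Fin (n + 1) → ℝ :=
  Fin.cons (1 / (n + 1)) fun i => -expKnot n ((i : ℕ) + 1)

theorem expNetA_nonneg (n : ℕ) (j : Fin (n + 1)) : 0 ≤ expNetA n j :=
  Fin.cases zero_le_one (fun i => sub_nonneg.2 (monotone_expKnotSlope n (Nat.le_succ i))) j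

theorem expNetA_le_one (n : ℕ) (j : Fin (n + 1)) : expNetA n j ≤ 1 :=
  Fin.cases le_rfl
    (fun i => (sub_le_self _ (expKnotSlope_nonneg n i)).trans (expKnotSlope_le_one i.isLt)) j

theorem expNetW_mem_Icc (n : ℕ) (j : Fin (n + 1)) : expNetW n j ∈ Set.Icc 0 1 :=
  Fin.cases ⟨le_rfl, zero_le_one⟩ (fun _ => ⟨zero_le_one, le_rfl⟩) j

theorem abs_expNetB_le {n : ℕ} (hn : 1 ≤ n) (j : Fin (n + 1)) :
    |expNetB n j| ≤ log (n + 1) := by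
  refine Fin.cases ?_ (fun i => ?_) j
  · have hn' : (2 : ℝ) ≤ n + 1 := by exact_mod_cast Nat.succ_le_succ hn
    calc |expNetB n 0| = 1 / (n + 1) :=
          abs_of_pos (by simp only [expNetB, Fin.cons_zero]; positivity)
      _ ≤ 1 / 2 := by gcongr
      _ ≤ log 2 := by linarith [log_two_gt_d9]
      _ ≤ log (n + 1) := log_le_log two_pos hn'
  · simp only [expNetB, Fin.cons_succ, abs_neg]
    rw [abs_of_nonpos (expKnot_nonpos (by omega))]
    linarith [neg_log_le_expKnot (n := n) ((i : ℕ).succ_pos)]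

theorem reluNet_expNet (n : ℕ) (x : ℝ) :
    reluNet (expNetA n) (expNetW n) (expNetB n) x = 1 / (n + 1) +
      ∑ i ∈ range n,
        (expKnotSlope n (i + 1) - expKnotSlope n i) * max (x - expKnot n (i + 1)) 0 := by
  rw [reluNet, Fin.sum_univ_succ, ← Fin.sum_univ_eq_sum_range
    (fun i => (expKnotSlope n (i + 1) - expKnotSlope n i) * max (x - expKnot n (i + 1)) 0)]
  simp only [expNetA, expNetW, expNetB, Fin.cons_zero, Fin.cons_succ, zero_mul, zero_add, one_mul,
    sub_eq_add_neg, one_div, add_left_inj, sup_eq_left, inv_nonneg]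
  positivity

section ExpNet

variable {n : ℕ} {x : ℝ}

theorem reluNet_expNet_eq_sum_chord (hx : x ≤ 0) :
    reluNet (expNetA n) (expNetW n) (expNetB n) x = 1 / (n + 1) +
      ∑ i ∈ range n, slope exp (expKnot n (i + 1)) (expKnot n (i + 1 + 1)) *
        (max (x - expKnot n (i + 1)) 0 - max (x - expKnot n (i + 1 + 1)) 0) := by
  rw [reluNet_expNet, sum_range_sub_mul_eq_sum_mul_sub (expKnotSlope n)
    (fun i => max (x - expKnot n (i + 1)) 0) n (expKnotSlope_zero n)
    (by simp only [expKnot_succ_self, sub_zero, max_eq_right hx])]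
  simp only [expKnotSlope_succ]

theorem exp_le_reluNet_expNet (hx : x ≤ 0) :
    exp x ≤ reluNet (expNetA n) (expNetW n) (expNetB n) x := by
  set E : ℕ → ℝ := fun k => min (exp x) (exp (expKnot n k))
  have hchord : ∑ i ∈ range n, (E (i + 1 + 1) - E (i + 1)) ≤
      ∑ i ∈ range n, slope exp (expKnot n (i + 1)) (expKnot n (i + 1 + 1)) *
        (max (x - expKnot n (i + 1)) 0 - max (x - expKnot n (i + 1 + 1)) 0) :=
    sum_le_sum fun i _ => min_sub_min_le_slope_mul_max_sub_max exp_monotone convexOn_exp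
      (expKnot_lt_succ i.succ_pos) x
  have hlast : E (n + 1) = exp x := by
    simp only [E, expKnot_succ_self, exp_zero, min_eq_left (exp_le_one_iff.2 hx)]
  have hfirst : E 1 ≤ 1 / (n + 1) :=
    (min_le_right _ _).trans_eq (by rw [exp_expKnot one_pos, Nat.cast_one])
  rw [sum_range_sub (fun i => E (i + 1)), hlast] at hchord
  rw [reluNet_expNet_eq_sum_chord hx]
  linarith

theorem reluNet_expNet_le (hx : x ≤ 0) :
    reluNet (expNetA n) (expNetW n) (expNetB n) x ≤ 1 / (n + 1) + min (exp x) (n / (n + 1)) := by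
  set D : ℕ → ℝ := fun k => min (exp x) (k / (n + 1))
  have hchord : ∀ i ∈ range n, slope exp (expKnot n (i + 1)) (expKnot n (i + 1 + 1)) *
      (max (x - expKnot n (i + 1)) 0 - max (x - expKnot n (i + 1 + 1)) 0) ≤ D (i + 1) - D i := by
    intro i _
    have hlt := expKnot_lt_succ (n := n) i.succ_pos
    rcases le_or_gt x (expKnot n (i + 1)) with hxt | htx
    · rw [max_eq_right (by linarith), max_eq_right (by linarith), sub_zero, mul_zero, sub_nonneg]
      exact min_le_min_left _ (by gcongr; linarith)
    · have hi : ((i + 1 : ℕ) : ℝ) / (n + 1) < exp x := by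
        rw [← exp_expKnot i.succ_pos]; exact exp_lt_exp.2 htx
      calc _ ≤ exp (expKnot n (i + 1 + 1)) - exp (expKnot n (i + 1)) :=
            slope_mul_max_sub_max_le exp_monotone hlt x
        _ = D (i + 1) - D i := by
          simp only [D]
          have hi' : (i : ℝ) / (n + 1) ≤ exp x :=
            (div_le_div_of_nonneg_right (by push_cast; linarith) (by positivity)).trans hi.le
          rw [exp_expKnot i.succ_pos, exp_expKnot (i + 1).succ_pos, min_eq_right hi.le,
            min_eq_right hi']
          push_cast
          ring
  have hsum := sum_le_sum hchord
  rw [sum_range_sub D n] at hsum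
  have hzero : D 0 = 0 := by simp only [D, Nat.cast_zero, zero_div, min_eq_right (exp_pos x).le]
  rw [reluNet_expNet_eq_sum_chord hx]
  linarith

end ExpNet

/-- ReLU approximation of the exponential function on `(-∞, 0]`: for any `δ > 0`,
with `M = ⌈1/δ⌉ + 1` neurons, there is a one-hidden-layer ReLU network
`exp_δ(x) = ∑ j, a j * ReLU (w j * x + b j)` with `|a j| ≤ 2`, `|w j| ≤ 1`,
`|b j| ≤ log M`, which is non-decreasing on `(-∞, 0]`, approximates `exp` to error `δ`
on `(-∞, 0]`, and satisfies `exp_δ(0) = 1`. -/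
theorem stmt_5 (δ : ℝ) (hδ : 0 < δ) :
    ∃ a w b : Fin (⌈1/δ⌉₊ + 1) → ℝ,
      (∀ j, |a j| ≤ 2 ∧ |w j| ≤ 1 ∧ |b j| ≤ Real.log (⌈1/δ⌉₊ + 1)) ∧
      MonotoneOn (fun x : ℝ => ∑ j, a j * max (w j * x + b j) 0) (Set.Iic 0) ∧
      (∀ x : ℝ, x ≤ 0 → |Real.exp x - ∑ j, a j * max (w j * x + b j) 0| ≤ δ) ∧
      (∑ j, a j * max (w j * 0 + b j) 0) = 1 := by
  set n := ⌈1/δ⌉₊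
  have hn : 1 ≤ n := Nat.ceil_pos.2 (by positivity)
  have hδn : 1 / ((n : ℝ) + 1) ≤ δ :=
    (one_div_le (by positivity) hδ).2 ((Nat.le_ceil (1 / δ)).trans (by linarith))
  refine ⟨expNetA n, expNetW n, expNetB n, fun j => ⟨?_, ?_, abs_expNetB_le hn j⟩,
    (monotone_reluNet (expNetA_nonneg n) fun j => (expNetW_mem_Icc n j).1).monotoneOn _,
    fun x hx => ?_, ?_⟩
  · rw [abs_of_nonneg (expNetA_nonneg n j)]
    linarith [expNetA_le_one n j]
  · rw [abs_of_nonneg (expNetW_mem_Icc n j).1]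
    exact (expNetW_mem_Icc n j).2
  · change |exp x - reluNet (expNetA n) (expNetW n) (expNetB n) x| ≤ δ
    rw [abs_sub_comm, abs_of_nonneg (sub_nonneg.2 (exp_le_reluNet_expNet hx))]
    linarith [reluNet_expNet_le (n := n) hx, min_le_left (exp x) (n / (n + 1))]
  · change reluNet (expNetA n) (expNetW n) (expNetB n) 0 = 1
    refine le_antisymm ?_ (by simpa using exp_le_reluNet_expNet (n := n) le_rfl)
    calc _ ≤ 1 / (n + 1) + min (exp 0) (n / (n + 1)) := reluNet_expNet_le le_rfl
      _ ≤ 1 / (n + 1) + n / (n + 1) := by gcongr; exact min_le_right _ _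
      _ = 1 := by field_simp; ring
end

section
/- Suppose functions f_ι^{(ℓ)} and their approximants f̄_ι^{(ℓ)} satisfy ‖f_ι^{(L)}(x) - f̄_ι^{(L)}(x)‖_∞ ≤ δ for all x ∈ [S] and ‖f_ι^{(ℓ)}(h) - f̄_ι^{(ℓ)}(h)‖_∞ ≤ δ for all h ∈ ℝ^S with max_j h_j = 0 and all ℓ ≤ L-1, where each f_ι^{(ℓ)} for ℓ ≤ L-1 is non-expansive in sup norm. Consider the exact message passing: q_v^{(ℓ)} = f_{ι(v)}^{(ℓ)}(h_v^{(ℓ)}), h_v^{(ℓ-1)} = normalize(Σ_{v'∈C(v)} q_{v'}^{(ℓ)}), and the approximate version with f̄ in place of f, both initialized identically at the leaves. Then ‖h_r^{(0)} - h̄_r^{(0)}‖_∞ ≤ δ · Π_{ℓ=1}^L (2m^{(ℓ)} + 1), where m^{(ℓ)} is the number of children per node at layer ℓ and normalize(h)_s = h_s - max_{s'} h_{s'}. -/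
/-- Error propagation for approximate message passing on a rooted tree of height
`L = L' + 1`, in which each node at layer `ℓ` has exactly `m (ℓ+1)` children.
The tree is given abstractly: `nodes ℓ` is the set of nodes at layer `ℓ`, `child ℓ v k`
is the `k`-th child of `v`, and `rank` recovers the child index. Messages live in
`ℝ^S` with the sup norm (the norm on `Fin S → ℝ`). The exact messages `q, h` use the
functions `fL` (at the leaf layer `L`) and `f` (at layers `1 ≤ ℓ ≤ L'`, non-expansive
in sup norm), and the approximate messages `qb, hb` use `fLb, fb`, with per-layer
approximation error `δ` (for `f` only on inputs whose max coordinate is `0`); both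
recursions are initialized at the leaves from the same input `x` and use
`normalize(g)_s = g_s - max_{s'} g_{s'}`. Then the root messages differ by at most
`δ * ∏_{ℓ=1}^{L} (2 m ℓ + 1)`. -/
theorem stmt_10 (S : ℕ) [NeZero S] (L' : ℕ) (m : ℕ → ℕ) (δ : ℝ) (hδ : 0 ≤ δ)
    (nodes : ℕ → Type)
    (child : ∀ ℓ, nodes ℓ → Fin (m (ℓ + 1)) → nodes (ℓ + 1))
    (rank : ∀ ℓ, nodes (ℓ + 1) → Fin (m (ℓ + 1)))
    (hrank : ∀ ℓ (v : nodes ℓ) (k : Fin (m (ℓ + 1))), rank ℓ (child ℓ v k) = k)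
    (x : nodes (L' + 1) → Fin S)
    (fL fLb : Fin (m (L' + 1)) → Fin S → Fin S → ℝ)
    (f fb : ∀ ℓ : ℕ, Fin (m ℓ) → (Fin S → ℝ) → Fin S → ℝ)
    (herrL : ∀ (k : Fin (m (L' + 1))) (a : Fin S), ‖fL k a - fLb k a‖ ≤ δ)
    (herr : ∀ ℓ, 1 ≤ ℓ → ℓ ≤ L' → ∀ (k : Fin (m ℓ)) (g : Fin S → ℝ),
      Finset.univ.sup' Finset.univ_nonempty g = 0 → ‖f ℓ k g - fb ℓ k g‖ ≤ δ)
    (hnonexp : ∀ ℓ, 1 ≤ ℓ → ℓ ≤ L' → ∀ (k : Fin (m ℓ)) (g₁ g₂ : Fin S → ℝ),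
      ‖f ℓ k g₁ - f ℓ k g₂‖ ≤ ‖g₁ - g₂‖)
    (q qb : ∀ ℓ : ℕ, nodes ℓ → Fin S → ℝ)
    (h hb : ∀ ℓ : ℕ, nodes ℓ → Fin S → ℝ)
    -- exact message passing
    (hq_leaf : ∀ w : nodes (L' + 1), q (L' + 1) w = fL (rank L' w) (x w))
    (hq : ∀ ℓ : ℕ, ℓ + 1 ≤ L' → ∀ w : nodes (ℓ + 1),
      q (ℓ + 1) w = f (ℓ + 1) (rank ℓ w) (h (ℓ + 1) w))
    (hh : ∀ ℓ : ℕ, ℓ ≤ L' → ∀ v : nodes ℓ,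
      h ℓ v = fun s => (∑ k, q (ℓ + 1) (child ℓ v k) s) -
        Finset.univ.sup' Finset.univ_nonempty (fun s' => ∑ k, q (ℓ + 1) (child ℓ v k) s'))
    -- approximate message passing
    (hqb_leaf : ∀ w : nodes (L' + 1), qb (L' + 1) w = fLb (rank L' w) (x w))
    (hqb : ∀ ℓ : ℕ, ℓ + 1 ≤ L' → ∀ w : nodes (ℓ + 1),
      qb (ℓ + 1) w = fb (ℓ + 1) (rank ℓ w) (hb (ℓ + 1) w))
    (hhb : ∀ ℓ : ℕ, ℓ ≤ L' → ∀ v : nodes ℓ,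
      hb ℓ v = fun s => (∑ k, qb (ℓ + 1) (child ℓ v k) s) -
        Finset.univ.sup' Finset.univ_nonempty (fun s' => ∑ k, qb (ℓ + 1) (child ℓ v k) s')) :
    ∀ r : nodes 0, ‖h 0 r - hb 0 r‖ ≤ δ * ∏ ℓ ∈ Finset.Icc 1 (L' + 1), (2 * (m ℓ : ℝ) + 1) := by

  -- abbreviation for products
  have hP : ∀ a b : ℕ, (1:ℝ) ≤ ∏ j ∈ Finset.Icc a b, (2 * (m j : ℝ) + 1) := by
    intro a b
    calc (1:ℝ) = ∏ _j ∈ Finset.Icc a b, (1:ℝ) := by simp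
      _ ≤ ∏ j ∈ Finset.Icc a b, (2 * (m j : ℝ) + 1) := by
          apply Finset.prod_le_prod (fun i _ => by norm_num)
          intro i _
          have : (0:ℝ) ≤ (m i : ℝ) := Nat.cast_nonneg _
          linarith
  -- sup' comparison
  have hsup : ∀ A B : Fin S → ℝ,
      Finset.univ.sup' Finset.univ_nonempty A ≤ Finset.univ.sup' Finset.univ_nonempty B + ‖A - B‖ := by
    intro A B
    apply Finset.sup'_le
    intro s _
    have h1 : ‖(A - B) s‖ ≤ ‖A - B‖ := norm_le_pi_norm (A - B) s
    simp only [Pi.sub_apply, Real.norm_eq_abs] at h1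
    have h1' : A s - B s ≤ ‖A - B‖ := le_trans (le_abs_self _) h1
    have h2 : B s ≤ Finset.univ.sup' Finset.univ_nonempty B :=
      Finset.le_sup' B (Finset.mem_univ s)
    linarith
  -- normalize is 2-Lipschitz
  have hnormalize : ∀ A B : Fin S → ℝ,
      ‖(fun s => A s - Finset.univ.sup' Finset.univ_nonempty A)
        - (fun s => B s - Finset.univ.sup' Finset.univ_nonempty B)‖ ≤ 2 * ‖A - B‖ := by
    intro A B
    have hN : (0:ℝ) ≤ ‖A - B‖ := norm_nonneg _
    rw [pi_norm_le_iff_of_nonneg (by linarith)]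
    intro s
    have h1 := hsup A B
    have h2 := hsup B A
    rw [norm_sub_rev] at h2
    have h3 : ‖(A - B) s‖ ≤ ‖A - B‖ := norm_le_pi_norm (A - B) s
    simp only [Pi.sub_apply, Real.norm_eq_abs] at h3 ⊢
    have h3' := abs_le.mp h3
    rw [abs_le]
    constructor <;> [linarith [h3'.1]; linarith [h3'.2]]
  -- sum comparison
  have hsum : ∀ (n : ℕ) (F G : Fin n → Fin S → ℝ) (c : ℝ), 0 ≤ c →
      (∀ k, ‖F k - G k‖ ≤ c) →
      ‖(fun s => ∑ k, F k s) - (fun s => ∑ k, G k s)‖ ≤ (n : ℝ) * c := by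
    intro n F G c hc0 hc
    rw [pi_norm_le_iff_of_nonneg (by positivity)]
    intro s
    simp only [Pi.sub_apply, Real.norm_eq_abs]
    rw [← Finset.sum_sub_distrib]
    calc |∑ k, (F k s - G k s)| ≤ ∑ k, |F k s - G k s| := Finset.abs_sum_le_sum_abs _ _
      _ ≤ ∑ _k : Fin n, c := by
          apply Finset.sum_le_sum
          intro k _
          have h3 : ‖(F k - G k) s‖ ≤ ‖F k - G k‖ := norm_le_pi_norm (F k - G k) s
          simp only [Pi.sub_apply, Real.norm_eq_abs] at h3
          exact le_trans h3 (hc k)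
      _ = (n : ℝ) * c := by
          rw [Finset.sum_const, Finset.card_univ, Fintype.card_fin, nsmul_eq_mul]
  -- normalized messages have sup' zero
  have hbzero : ∀ ℓ, ℓ ≤ L' → ∀ v : nodes ℓ,
      Finset.univ.sup' Finset.univ_nonempty (hb ℓ v) = 0 := by
    intro ℓ hℓ v
    rw [hhb ℓ hℓ v]
    set B : Fin S → ℝ := fun s => ∑ k, qb (ℓ + 1) (child ℓ v k) s with hB
    set c := Finset.univ.sup' Finset.univ_nonempty B with hc
    apply le_antisymm
    · apply Finset.sup'_le
      intro s _
      have : B s ≤ c := Finset.le_sup' B (Finset.mem_univ s)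
      linarith
    · obtain ⟨s₀, _, hs₀⟩ := Finset.exists_mem_eq_sup' Finset.univ_nonempty B
      have h1 : (0:ℝ) = B s₀ - c := by rw [hc, ← hs₀]; ring
      rw [h1]
      exact Finset.le_sup' (fun s => B s - c) (Finset.mem_univ s₀)
  -- product splitting
  have hsplit : ∀ a b : ℕ, a ≤ b →
      ∏ j ∈ Finset.Icc a b, (2 * (m j : ℝ) + 1)
        = (2 * (m a : ℝ) + 1) * ∏ j ∈ Finset.Icc (a + 1) b, (2 * (m j : ℝ) + 1) := by
    intro a b hab
    rw [← Finset.Ico_add_one_right_eq_Icc, ← Finset.Ico_add_one_right_eq_Icc]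
    exact Finset.prod_eq_prod_Ico_succ_bot (by omega) _
  -- key induction on layers (descending)
  have key : ∀ k ℓ, ℓ + k = L' + 1 → 1 ≤ ℓ → ∀ w : nodes ℓ,
      ‖q ℓ w - qb ℓ w‖ ≤ δ * ∏ j ∈ Finset.Icc (ℓ + 1) (L' + 1), (2 * (m j : ℝ) + 1) := by
    intro k
    induction k with
    | zero =>
      intro ℓ hℓ h1 w
      have hℓ' : ℓ = L' + 1 := by omega
      subst hℓ'
      rw [hq_leaf w, hqb_leaf w]
      have he : Finset.Icc (L' + 1 + 1) (L' + 1) = ∅ := Finset.Icc_eq_empty (by omega)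
      rw [he, Finset.prod_empty, mul_one]
      exact herrL _ _
    | succ k ih =>
      intro ℓ hℓ h1 w
      obtain ⟨ℓ', rfl⟩ : ∃ ℓ', ℓ = ℓ' + 1 := ⟨ℓ - 1, by omega⟩
      have hle : ℓ' + 1 ≤ L' := by omega
      rw [hq ℓ' hle w, hqb ℓ' hle w]
      set P2 : ℝ := ∏ j ∈ Finset.Icc (ℓ' + 1 + 1 + 1) (L' + 1), (2 * (m j : ℝ) + 1) with hP2
      have hP2pos : (1:ℝ) ≤ P2 := hP _ _
      have hqdiff : ∀ k' : Fin (m (ℓ' + 1 + 1)),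
          ‖q (ℓ' + 1 + 1) (child (ℓ' + 1) w k') - qb (ℓ' + 1 + 1) (child (ℓ' + 1) w k')‖
            ≤ δ * P2 := by
        intro k'
        exact ih (ℓ' + 1 + 1) (by omega) (by omega) _
      have hdiff : ‖h (ℓ' + 1) w - hb (ℓ' + 1) w‖
          ≤ 2 * ((m (ℓ' + 1 + 1) : ℝ) * (δ * P2)) := by
        rw [hh (ℓ' + 1) hle w, hhb (ℓ' + 1) hle w]
        calc ‖_ - _‖ ≤ 2 * ‖(fun s => ∑ k, q (ℓ' + 1 + 1) (child (ℓ' + 1) w k) s)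
              - (fun s => ∑ k, qb (ℓ' + 1 + 1) (child (ℓ' + 1) w k) s)‖ := hnormalize _ _
          _ ≤ 2 * ((m (ℓ' + 1 + 1) : ℝ) * (δ * P2)) := by
              have := hsum (m (ℓ' + 1 + 1))
                (fun k => q (ℓ' + 1 + 1) (child (ℓ' + 1) w k))
                (fun k => qb (ℓ' + 1 + 1) (child (ℓ' + 1) w k))
                (δ * P2) (by positivity) hqdiff
              linarith
      have hf1 : ‖f (ℓ' + 1) (rank ℓ' w) (h (ℓ' + 1) w)
            - f (ℓ' + 1) (rank ℓ' w) (hb (ℓ' + 1) w)‖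
          ≤ ‖h (ℓ' + 1) w - hb (ℓ' + 1) w‖ :=
        hnonexp (ℓ' + 1) (by omega) hle _ _ _
      have hf2 : ‖f (ℓ' + 1) (rank ℓ' w) (hb (ℓ' + 1) w)
            - fb (ℓ' + 1) (rank ℓ' w) (hb (ℓ' + 1) w)‖ ≤ δ :=
        herr (ℓ' + 1) (by omega) hle _ _ (hbzero (ℓ' + 1) hle w)
      have htri : ‖f (ℓ' + 1) (rank ℓ' w) (h (ℓ' + 1) w)
            - fb (ℓ' + 1) (rank ℓ' w) (hb (ℓ' + 1) w)‖
          ≤ ‖f (ℓ' + 1) (rank ℓ' w) (h (ℓ' + 1) w)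
              - f (ℓ' + 1) (rank ℓ' w) (hb (ℓ' + 1) w)‖
            + ‖f (ℓ' + 1) (rank ℓ' w) (hb (ℓ' + 1) w)
              - fb (ℓ' + 1) (rank ℓ' w) (hb (ℓ' + 1) w)‖ :=
        norm_sub_le_norm_sub_add_norm_sub _ _ _
      have hfinal : ‖f (ℓ' + 1) (rank ℓ' w) (h (ℓ' + 1) w)
            - fb (ℓ' + 1) (rank ℓ' w) (hb (ℓ' + 1) w)‖
          ≤ 2 * ((m (ℓ' + 1 + 1) : ℝ) * (δ * P2)) + δ := by linarith
      refine hfinal.trans ?_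
      rw [hsplit (ℓ' + 1 + 1) (L' + 1) (by omega), ← hP2]
      have hm : (0:ℝ) ≤ (m (ℓ' + 1 + 1) : ℝ) := Nat.cast_nonneg _
      nlinarith
  -- conclude at the root
  intro r
  rw [hh 0 (Nat.zero_le _) r, hhb 0 (Nat.zero_le _) r]
  set P1 : ℝ := ∏ j ∈ Finset.Icc 2 (L' + 1), (2 * (m j : ℝ) + 1) with hP1
  have hP1pos : (1:ℝ) ≤ P1 := hP _ _
  have hqdiff : ∀ k' : Fin (m 1),
      ‖q 1 (child 0 r k') - qb 1 (child 0 r k')‖ ≤ δ * P1 := by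
    intro k'
    have := key L' 1 (by omega) le_rfl (child 0 r k')
    simpa using this
  calc ‖_ - _‖ ≤ 2 * ‖(fun s => ∑ k, q 1 (child 0 r k) s)
        - (fun s => ∑ k, qb 1 (child 0 r k) s)‖ := hnormalize _ _
    _ ≤ 2 * ((m 1 : ℝ) * (δ * P1)) := by
        have := hsum (m 1) (fun k => q 1 (child 0 r k)) (fun k => qb 1 (child 0 r k))
          (δ * P1) (by positivity) hqdiff
        linarith
    _ ≤ δ * ((2 * (m 1 : ℝ) + 1) * P1) := by
        have hm : (0:ℝ) ≤ (m 1 : ℝ) := Nat.cast_nonneg _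
        nlinarith
    _ = δ * ∏ j ∈ Finset.Icc 1 (L' + 1), (2 * (m j : ℝ) + 1) := by
        rw [hsplit 1 (L' + 1) (by omega), ← hP1]
end
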